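/- arXiv:1304.5283 — 5 statements merged into one kernel-verified Lean document; each statement's English description precedes it below -/
import Mathlib

section
/- For all real parameters α₁, α₂, λ₁, λ₂ and every point x = (x₁,x₂,x₃,x₄) ∈ ℝ⁴, the Euclidean inner product of X(x) with x equals ‖x‖²(1 − ‖x‖²); in particular X is tangent to the unit sphere S³ = {x ∈ ℝ⁴ : ‖x‖ = 1}. -/
/-!
In `⟪X(x), x⟫` the radial part `x (1 - r²)` contributes `r² (1 - r²)`, and every other term cancels
against a partner: the rotation gives `-x₁x₂ + x₂x₁`, the `α₁`-terms
`x₄ (x₃² - x₁² - x₂²) - x₄ (x₃² - x₁² - x₂²)`, the `α₂`-terms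
`x₄² (x₁² + x₂² + x₃²) - x₄² (x₁² + x₂² + x₃²)`, the `λ₁`-terms `x₁x₂x₃x₄ - x₁x₂x₃x₄` and the
`λ₂`-terms `x₁x₃²x₄ - x₁x₃²x₄`.
-/

open scoped RealInnerProductSpace

/-- `lam₁ lam₂` are the paper's `λ₁ λ₂`. -/
noncomputable def Xfield (α₁ α₂ lam₁ lam₂ : ℝ) (x : EuclideanSpace ℝ (Fin 4)) :
    EuclideanSpace ℝ (Fin 4) :=
  let x₁ := x 0; let x₂ := x 1; let x₃ := x 2; let x₄ := x 3
  let r2 := x₁ ^ 2 + x₂ ^ 2 + x₃ ^ 2 + x₄ ^ 2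
  WithLp.toLp 2 ![x₁ * (1 - r2) - x₂ - α₁ * x₁ * x₄ + α₂ * x₁ * x₄ ^ 2 + lam₂ * x₃ ^ 2 * x₄,
    x₂ * (1 - r2) + x₁ - α₁ * x₂ * x₄ + α₂ * x₂ * x₄ ^ 2,
    x₃ * (1 - r2) + α₁ * x₃ * x₄ + α₂ * x₃ * x₄ ^ 2 + lam₁ * x₁ * x₂ * x₄ - lam₂ * x₁ * x₃ * x₄,
    x₄ * (1 - r2) - α₁ * (x₃ ^ 2 - x₁ ^ 2 - x₂ ^ 2) - α₂ * x₄ * (x₁ ^ 2 + x₂ ^ 2 + x₃ ^ 2)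
      - lam₁ * x₁ * x₂ * x₃]

lemma EuclideanSpace.real_norm_sq_eq_fin_four (x : EuclideanSpace ℝ (Fin 4)) :
    ‖x‖ ^ 2 = x 0 ^ 2 + x 1 ^ 2 + x 2 ^ 2 + x 3 ^ 2 := by
  rw [EuclideanSpace.real_norm_sq_eq, Fin.sum_univ_four]

lemma inner_Xfield_self (α₁ α₂ lam₁ lam₂ : ℝ) (x : EuclideanSpace ℝ (Fin 4)) :
    ⟪Xfield α₁ α₂ lam₁ lam₂ x, x⟫ = ‖x‖ ^ 2 * (1 - ‖x‖ ^ 2) := by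
  rw [EuclideanSpace.real_norm_sq_eq_fin_four, PiLp.inner_apply, Fin.sum_univ_four]
  simp only [Xfield, RCLike.inner_apply, conj_trivial, Matrix.cons_val_zero, Matrix.cons_val_one,
    Matrix.cons_val_two, Matrix.cons_val_three, Matrix.head_cons, Matrix.tail_cons]
  ring

/-- The inner product of `X(x)` with `x` equals `‖x‖²(1 − ‖x‖²)`; in particular `X` is
tangent to the unit sphere `S³`. -/
theorem stmt0 (α₁ α₂ lam₁ lam₂ : ℝ) (x : EuclideanSpace ℝ (Fin 4)) :
    ⟪Xfield α₁ α₂ lam₁ lam₂ x, x⟫ = ‖x‖ ^ 2 * (1 - ‖x‖ ^ 2) ∧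
    (‖x‖ = 1 → ⟪Xfield α₁ α₂ lam₁ lam₂ x, x⟫ = 0) := by
  refine ⟨inner_Xfield_self α₁ α₂ lam₁ lam₂ x, fun hx => ?_⟩
  rw [inner_Xfield_self, hx]
  norm_num
end

section
/- The unit sphere is globally attracting: for all real parameters α₁, α₂, λ₁, λ₂, if u : ℝ → ℝ⁴ satisfies u'(t) = X(u(t)) for all t ≥ 0 and u(0) ≠ 0, then ‖u(t)‖ tends to 1 as t → +∞. -/
open Filter

open Real Set

theorem inner_Xfield (α₁ α₂ lam₁ lam₂ : ℝ) (x : EuclideanSpace ℝ (Fin 4)) :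
    inner ℝ x (Xfield α₁ α₂ lam₁ lam₂ x) = ‖x‖ ^ 2 * (1 - ‖x‖ ^ 2) := by
  simp only [EuclideanSpace.real_norm_sq_eq, PiLp.inner_apply, RCLike.inner_apply, conj_trivial,
    Fin.sum_univ_four, Xfield, Matrix.cons_val_zero, Matrix.cons_val_one, Matrix.cons_val_two,
    Matrix.cons_val_three, Matrix.head_cons, Matrix.tail_cons]
  ring

theorem eqOn_Icc_of_hasDerivAt_of_locallyLipschitz {E : Type*} [NormedAddCommGroup E]
    [NormedSpace ℝ E] {v : E → E} (hv : LocallyLipschitz v) {f g : ℝ → E} {a b : ℝ}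
    (hf : ∀ t ∈ Icc a b, HasDerivAt f (v (f t)) t) (hg : ∀ t ∈ Icc a b, HasDerivAt g (v (g t)) t)
    (ha : f a = g a) : EqOn f g (Icc a b) := by
  have hf_cont : ContinuousOn f (Icc a b) := HasDerivAt.continuousOn hf
  have hg_cont : ContinuousOn g (Icc a b) := HasDerivAt.continuousOn hg
  set s := f '' Icc a b ∪ g '' Icc a b
  have hs : IsCompact s :=
    (isCompact_Icc.image_of_continuousOn hf_cont).union (isCompact_Icc.image_of_continuousOn hg_cont)
  obtain ⟨K, hK⟩ := (hv.locallyLipschitzOn (s := s)).exists_lipschitzOnWith_of_compact hs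
  exact ODE_solution_unique_of_mem_Icc_right (v := fun _ ↦ v) (s := fun _ ↦ s) (fun _ _ ↦ hK)
    hf_cont (fun t ht ↦ (hf t (Ico_subset_Icc_self ht)).hasDerivWithinAt)
    (fun t ht ↦ .inl ⟨t, Ico_subset_Icc_self ht, rfl⟩)
    hg_cont (fun t ht ↦ (hg t (Ico_subset_Icc_self ht)).hasDerivWithinAt)
    (fun t ht ↦ .inr ⟨t, Ico_subset_Icc_self ht, rfl⟩) ha

theorem locallyLipschitz_logistic : LocallyLipschitz fun z : ℝ ↦ 2 * (z * (1 - z)) :=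
  ContDiff.locallyLipschitz (𝕂 := ℝ) (by fun_prop)

noncomputable def logisticSol (c t : ℝ) : ℝ := c / (c + (1 - c) * exp (-2 * t))

theorem logisticSol_zero (c : ℝ) : logisticSol c 0 = c := by
  simp [logisticSol]

theorem logisticSol_denom_pos {c t : ℝ} (hc : 0 ≤ c) (ht : 0 ≤ t) :
    0 < c + (1 - c) * exp (-2 * t) := by
  have h : exp (-2 * t) ≤ 1 := exp_le_one_iff.2 (by linarith)
  nlinarith [exp_pos (-2 * t)]

theorem hasDerivAt_logisticSol {c t : ℝ} (hc : 0 ≤ c) (ht : 0 ≤ t) :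
    HasDerivAt (logisticSol c) (2 * (logisticSol c t * (1 - logisticSol c t))) t := by
  have hD := (logisticSol_denom_pos hc ht).ne'
  have hexp : HasDerivAt (fun s ↦ exp (-2 * s)) (-2 * exp (-2 * t)) t := by
    simpa [mul_comm] using ((hasDerivAt_id t).const_mul (-2)).exp
  refine ((hasDerivAt_const t c).div ((hexp.const_mul (1 - c)).const_add c) hD).congr_deriv ?_
  simp only [logisticSol]
  generalize exp (-2 * t) = e at hD ⊢
  field_simp
  ring

theorem tendsto_logisticSol {c : ℝ} (hc : 0 < c) : Tendsto (logisticSol c) atTop (nhds 1) := by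
  have hexp : Tendsto (fun t ↦ exp (-2 * t)) atTop (nhds 0) :=
    tendsto_exp_atBot.comp (tendsto_id.const_mul_atTop_of_neg (by norm_num))
  have hD : Tendsto (fun t ↦ c + (1 - c) * exp (-2 * t)) atTop (nhds c) := by
    simpa using (hexp.const_mul (1 - c)).const_add c
  rw [← div_self hc.ne']
  exact tendsto_const_nhds.div hD hc.ne'

theorem tendsto_one_of_hasDerivAt_logistic {y : ℝ → ℝ}
    (hy : ∀ t, 0 ≤ t → HasDerivAt y (2 * (y t * (1 - y t))) t) (h0 : 0 < y 0) :
    Tendsto y atTop (nhds 1) := by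
  refine (tendsto_logisticSol h0).congr' ?_
  filter_upwards [eventually_ge_atTop 0] with T hT
  exact (eqOn_Icc_of_hasDerivAt_of_locallyLipschitz locallyLipschitz_logistic
    (fun t ht ↦ hasDerivAt_logisticSol h0.le ht.1) (fun t ht ↦ hy t ht.1)
    (logisticSol_zero _)) ⟨hT, le_rfl⟩

/-- The unit sphere is globally attracting: any solution with nonzero initial condition
has norm tending to 1 as `t → +∞`. -/
theorem stmt2 (α₁ α₂ lam₁ lam₂ : ℝ) (u : ℝ → EuclideanSpace ℝ (Fin 4))
    (hu : ∀ t : ℝ, 0 ≤ t → HasDerivAt u (Xfield α₁ α₂ lam₁ lam₂ (u t)) t)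
    (h0 : u 0 ≠ 0) :
    Tendsto (fun t : ℝ => ‖u t‖) atTop (nhds 1) := by
  have hy (t : ℝ) (ht : 0 ≤ t) :
      HasDerivAt (‖u ·‖ ^ 2) (2 * (‖u t‖ ^ 2 * (1 - ‖u t‖ ^ 2))) t := by
    simpa only [inner_Xfield] using (hu t ht).norm_sq
  have := (tendsto_one_of_hasDerivAt_logistic hy (by positivity)).sqrt
  simpa only [sqrt_sq (norm_nonneg _), sqrt_one] using this
end

section
/- Suppose α₂ < 0 < α₁, α₁ + α₂ > 0 and λ₂ = 0 (λ₁ arbitrary). Then the set of equilibria of X, i.e. {x ∈ ℝ⁴ : X(x) = 0}, is exactly {(0,0,0,0), v, w}, where v = (0,0,0,1) and w = (0,0,0,−1). -/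
/-- The equilibrium `v = (0,0,0,1)`. -/
noncomputable def vpt : EuclideanSpace ℝ (Fin 4) := WithLp.toLp 2 ![0, 0, 0, 1]

/-- The equilibrium `w = (0,0,0,−1)`. -/
noncomputable def wpt : EuclideanSpace ℝ (Fin 4) := WithLp.toLp 2 ![0, 0, 0, -1]
namespace Xfield

variable {α₁ α₂ lam₁ lam₂ : ℝ} {x : EuclideanSpace ℝ (Fin 4)}

theorem eq_zero_iff :
    Xfield α₁ α₂ lam₁ lam₂ x = 0 ↔
      let r2 := x 0 ^ 2 + x 1 ^ 2 + x 2 ^ 2 + x 3 ^ 2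
      x 0 * (1 - r2) - x 1 - α₁ * x 0 * x 3 + α₂ * x 0 * x 3 ^ 2 + lam₂ * x 2 ^ 2 * x 3 = 0 ∧
      x 1 * (1 - r2) + x 0 - α₁ * x 1 * x 3 + α₂ * x 1 * x 3 ^ 2 = 0 ∧
      x 2 * (1 - r2) + α₁ * x 2 * x 3 + α₂ * x 2 * x 3 ^ 2 + lam₁ * x 0 * x 1 * x 3
        - lam₂ * x 0 * x 2 * x 3 = 0 ∧
      x 3 * (1 - r2) - α₁ * (x 2 ^ 2 - x 0 ^ 2 - x 1 ^ 2)
        - α₂ * x 3 * (x 0 ^ 2 + x 1 ^ 2 + x 2 ^ 2) - lam₁ * x 0 * x 1 * x 2 = 0 := by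
  rw [← WithLp.ofLp_eq_zero]
  simp [Xfield, funext_iff, Fin.forall_fin_succ]

theorem apply_zero : Xfield α₁ α₂ lam₁ lam₂ 0 = 0 := by
  simp [eq_zero_iff]

theorem apply_vpt : Xfield α₁ α₂ lam₁ lam₂ vpt = 0 := by
  simp [eq_zero_iff, vpt]

theorem apply_wpt : Xfield α₁ α₂ lam₁ lam₂ wpt = 0 := by
  simp [eq_zero_iff, wpt]

theorem coord_zero_eq_zero_and_coord_one_eq_zero (h : Xfield α₁ α₂ lam₁ 0 x = 0) :
    x 0 = 0 ∧ x 1 = 0 := by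
  obtain ⟨e0, e1, -⟩ := eq_zero_iff.1 h
  have hsq : x 0 ^ 2 + x 1 ^ 2 = 0 := by linear_combination x 0 * e1 - x 1 * e0
  exact ⟨by nlinarith, by nlinarith⟩

theorem eq_zero_or_eq_vpt_or_eq_wpt (h : Xfield α₁ α₂ lam₁ lam₂ x = 0)
    (h0 : x 0 = 0) (h1 : x 1 = 0) (h2 : x 2 = 0) : x = 0 ∨ x = vpt ∨ x = wpt := by
  obtain ⟨-, -, -, e3⟩ := eq_zero_iff.1 h
  simp only [h0, h1, h2] at e3
  have hroots : x 3 * (1 - x 3) * (1 + x 3) = 0 := by linear_combination e3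
  rcases mul_eq_zero.1 hroots with h3 | h3
  · rcases mul_eq_zero.1 h3 with h3 | h3
    · left; ext i; fin_cases i <;> simp [h0, h1, h2, h3]
    · right; left; ext i; fin_cases i <;> simp [vpt, h0, h1, h2]; linarith
  · right; right; ext i; fin_cases i <;> simp [wpt, h0, h1, h2]; linarith

theorem add_mul_eq_zero_and_sq_add_sq_eq_one (h : Xfield α₁ α₂ lam₁ lam₂ x = 0)
    (h0 : x 0 = 0) (h1 : x 1 = 0) (h2 : x 2 ≠ 0) :
    α₁ + α₂ * x 3 = 0 ∧ x 2 ^ 2 + x 3 ^ 2 = 1 := by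
  obtain ⟨-, -, e2, e3⟩ := eq_zero_iff.1 h
  simp only [h0, h1] at e2 e3
  have hA : 1 - x 2 ^ 2 - x 3 ^ 2 + x 3 * (α₁ + α₂ * x 3) = 0 :=
    mul_left_cancel₀ h2 (by linear_combination e2)
  have hB : (x 2 ^ 2 + x 3 ^ 2) * (α₁ + α₂ * x 3) = 0 := by linear_combination x 3 * hA - e3
  have hα : α₁ + α₂ * x 3 = 0 := (mul_eq_zero.1 hB).resolve_left (by positivity)
  exact ⟨hα, by linear_combination -hA + x 3 * hα⟩

theorem coord_two_eq_zero (h₂ : α₂ < 0) (hsum : α₁ + α₂ > 0) (h : Xfield α₁ α₂ lam₁ lam₂ x = 0)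
    (h0 : x 0 = 0) (h1 : x 1 = 0) : x 2 = 0 := by
  by_contra h2
  obtain ⟨hα, hcircle⟩ := add_mul_eq_zero_and_sq_add_sq_eq_one h h0 h1 h2
  have h3 : 1 < x 3 := by nlinarith
  nlinarith [sq_pos_of_ne_zero h2]

end Xfield

theorem stmt3_general (α₁ α₂ lam₁ : ℝ) (h₂ : α₂ < 0) (hsum : α₁ + α₂ > 0) :
    {x : EuclideanSpace ℝ (Fin 4) | Xfield α₁ α₂ lam₁ 0 x = 0} = {0, vpt, wpt} := by
  ext x
  constructor
  · intro h
    obtain ⟨h0, h1⟩ := Xfield.coord_zero_eq_zero_and_coord_one_eq_zero h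
    exact Xfield.eq_zero_or_eq_vpt_or_eq_wpt h h0 h1 (Xfield.coord_two_eq_zero h₂ hsum h h0 h1)
  · rintro (rfl | rfl | rfl)
    exacts [Xfield.apply_zero, Xfield.apply_vpt, Xfield.apply_wpt]

/-- For `α₂ < 0 < α₁`, `α₁ + α₂ > 0` and `λ₂ = 0`, the equilibria of `X` are exactly
the origin, `v` and `w`. -/
theorem stmt3 (α₁ α₂ lam₁ : ℝ) (h₂ : α₂ < 0) (h₁ : 0 < α₁) (hsum : α₁ + α₂ > 0) :
    {x : EuclideanSpace ℝ (Fin 4) | Xfield α₁ α₂ lam₁ 0 x = 0} = {0, vpt, wpt} :=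
  stmt3_general α₁ α₂ lam₁ h₂ hsum
end

section
/- Heteroclinic connections from v to w (Theorem 3.1, item 1): suppose α₂ < 0 < α₁, α₁ + α₂ > 0 and λ₂ = 0 (λ₁ arbitrary). Let u : ℝ → ℝ⁴ be differentiable with u'(t) = X(u(t)) for all t, with u₁(t) = u₂(t) = 0 and u₃(t)² + u₄(t)² = 1 for all t, and with u(0) ∉ {v, w}. Then u(t) → w as t → +∞ and u(t) → v as t → −∞. -/
open Filter

/-!
On the invariant circle `x₁ = x₂ = 0`, `x₃² + x₄² = 1` the height `y = x₄` obeys the scalar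
equation `y' = -(1 - y²)(α₁ + α₂ y)`, and `α₁ + α₂ y ≥ α₁ + α₂ > 0` for `|y| ≤ 1`. So `y` decreases
strictly between the equilibria `±1`; its limit at `+∞` must be `-1`, since otherwise `y'` would
stay below a negative constant and `y` would be unbounded below. Reversing time gives the limit `1`
at `-∞`. Finally, on the circle `dist x w = √(2(1 + x₄))` and `dist x v = √(2(1 - x₄))`.
-/

open Filter Set Topology

section Logistic

variable {c : ℝ} {g y : ℝ → ℝ}

theorem tendsto_atTop_neg_one_of_hasDerivAt (hc : 0 < c)
    (hy : ∀ t, HasDerivAt y (-((1 - y t ^ 2) * g t)) t) (hg : ∀ t, c ≤ g t)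
    (hb : ∀ t, |y t| ≤ 1) (h1 : y 0 < 1) :
    Tendsto y atTop (𝓝 (-1)) := by
  have hbd : ∀ t, -1 ≤ y t ∧ y t ≤ 1 := fun t => abs_le.1 (hb t)
  have hanti : Antitone y :=
    antitone_of_hasDerivAt_nonpos hy fun t => neg_nonpos.2 <|
      mul_nonneg (sub_nonneg.2 ((sq_le_one_iff_abs_le_one _).2 (hb t))) (hc.le.trans (hg t))
  have hbdd : BddBelow (range y) := ⟨-1, forall_mem_range.2 fun t => (hbd t).1⟩
  set L := ⨅ t, y t
  have hL : Tendsto y atTop (𝓝 L) := tendsto_atTop_ciInf hanti hbdd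
  suffices L = -1 by rwa [this] at hL
  by_contra hL1
  have hLgt : -1 < L := (le_ciInf fun t => (hbd t).1).lt_of_ne' hL1
  set δ := (1 - y 0) * ((1 + L) * c)
  have hδ : 0 < δ := mul_pos (by linarith) (mul_pos (by linarith) hc)
  -- for `t ≥ 0` we have `L ≤ y t ≤ y 0`, hence `y' t ≤ -δ`
  have hslope : ∀ t ∈ Ici (0 : ℝ), deriv y t ≤ -δ := fun t ht => by
    have hyt : y t ≤ y 0 := hanti ht
    have hyL : L ≤ y t := ciInf_le hbdd t
    rw [(hy t).deriv]
    have : δ ≤ (1 - y t) * ((1 + y t) * g t) :=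
      mul_le_mul (by linarith) (mul_le_mul (by linarith) (hg t) hc.le (by linarith))
        (mul_nonneg (by linarith) hc.le) (by linarith [(hbd t).2])
    nlinarith
  have hdiff : Differentiable ℝ y := fun t => (hy t).differentiableAt
  set T := (y 0 + 2) / δ
  have hT : 0 ≤ T := div_nonneg (by linarith [(hbd 0).1]) hδ.le
  have hdrop := (convex_Ici (0 : ℝ)).image_sub_le_mul_sub_of_deriv_le
    hdiff.continuous.continuousOn hdiff.differentiableOn
    (fun t ht => hslope t (interior_subset ht)) 0 self_mem_Ici T hT hT
  have hδT : δ * T = y 0 + 2 := mul_div_cancel₀ _ hδ.ne'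
  linarith [(hbd T).1]

theorem tendsto_atBot_one_of_hasDerivAt (hc : 0 < c)
    (hy : ∀ t, HasDerivAt y (-((1 - y t ^ 2) * g t)) t) (hg : ∀ t, c ≤ g t)
    (hb : ∀ t, |y t| ≤ 1) (h0 : -1 < y 0) :
    Tendsto y atBot (𝓝 1) := by
  have hrev : Tendsto (fun t => -y (-t)) atTop (𝓝 (-1)) := by
    refine tendsto_atTop_neg_one_of_hasDerivAt hc (g := fun t => g (-t)) (fun t => ?_)
      (fun t => hg (-t)) (fun t => by simpa using hb (-t)) (by rw [neg_zero]; linarith)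
    exact ((hy (-t)).comp t (hasDerivAt_neg t)).neg.congr_deriv (by ring)
  simpa [Function.comp_def] using hrev.neg.comp tendsto_neg_atBot_atTop

end Logistic

section Circle

variable {x : EuclideanSpace ℝ (Fin 4)}

theorem Xfield_three_of_circle (α₁ α₂ lam₁ lam₂ : ℝ) (h0 : x 0 = 0) (h1 : x 1 = 0)
    (hx : x 2 ^ 2 + x 3 ^ 2 = 1) :
    Xfield α₁ α₂ lam₁ lam₂ x 3 = -((1 - x 3 ^ 2) * (α₁ + α₂ * x 3)) := by
  have hx2 : x 2 ^ 2 = 1 - x 3 ^ 2 := by linarith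
  simp [Xfield, h0, h1, hx2]
  ring

theorem dist_wpt_of_circle (h0 : x 0 = 0) (h1 : x 1 = 0) (hx : x 2 ^ 2 + x 3 ^ 2 = 1) :
    dist x wpt = √(2 * (1 + x 3)) := by
  rw [EuclideanSpace.dist_eq]
  congr 1
  simp [Fin.sum_univ_four, wpt, h0, h1, Real.dist_eq, sq_abs]
  linear_combination hx

theorem dist_vpt_of_circle (h0 : x 0 = 0) (h1 : x 1 = 0) (hx : x 2 ^ 2 + x 3 ^ 2 = 1) :
    dist x vpt = √(2 * (1 - x 3)) := by
  rw [EuclideanSpace.dist_eq]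
  congr 1
  simp [Fin.sum_univ_four, vpt, h0, h1, Real.dist_eq, sq_abs]
  linear_combination hx

end Circle

theorem stmt15_general (α₁ α₂ lam₁ : ℝ) (h₂ : α₂ < 0) (hsum : α₁ + α₂ > 0)
    (u : ℝ → EuclideanSpace ℝ (Fin 4))
    (hu : ∀ t : ℝ, HasDerivAt u (Xfield α₁ α₂ lam₁ 0 (u t)) t)
    (hc₁ : ∀ t : ℝ, u t 0 = 0) (hc₂ : ∀ t : ℝ, u t 1 = 0)
    (hc : ∀ t : ℝ, (u t 2) ^ 2 + (u t 3) ^ 2 = 1)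
    (hne : u 0 ≠ vpt ∧ u 0 ≠ wpt) :
    Tendsto u atTop (nhds wpt) ∧ Tendsto u atBot (nhds vpt) := by
  have hb : ∀ t, |u t 3| ≤ 1 := fun t => (sq_le_one_iff_abs_le_one _).1 (by nlinarith [hc t])
  have hy : ∀ t, HasDerivAt (fun s => u s 3) (-((1 - u t 3 ^ 2) * (α₁ + α₂ * u t 3))) t :=
    fun t => by
      have h := (EuclideanSpace.proj (3 : Fin 4)).hasFDerivAt.comp_hasDerivAt t (hu t)
      rw [PiLp.proj_apply, Xfield_three_of_circle α₁ α₂ lam₁ 0 (hc₁ t) (hc₂ t) (hc t)] at h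
      exact h
  have hg : ∀ t, α₁ + α₂ ≤ α₁ + α₂ * u t 3 := fun t => by nlinarith [(abs_le.1 (hb t)).2]
  have hv := dist_vpt_of_circle (hc₁ 0) (hc₂ 0) (hc 0)
  have hw := dist_wpt_of_circle (hc₁ 0) (hc₂ 0) (hc 0)
  have h1 : u 0 3 < 1 := (abs_le.1 (hb 0)).2.lt_of_ne fun h =>
    hne.1 (dist_eq_zero.1 (by simp [hv, h]))
  have h0 : -1 < u 0 3 := (abs_le.1 (hb 0)).1.lt_of_ne fun h =>
    hne.2 (dist_eq_zero.1 (by simp [hw, ← h]))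
  constructor
  · rw [tendsto_iff_dist_tendsto_zero]
    simp_rw [dist_wpt_of_circle (hc₁ _) (hc₂ _) (hc _)]
    simpa using (((tendsto_atTop_neg_one_of_hasDerivAt hsum hy hg hb h1).const_add 1).const_mul
      2).sqrt
  · rw [tendsto_iff_dist_tendsto_zero]
    simp_rw [dist_vpt_of_circle (hc₁ _) (hc₂ _) (hc _)]
    simpa using (((tendsto_atBot_one_of_hasDerivAt hsum hy hg hb h0).const_sub 1).const_mul
      2).sqrt

/-- Theorem 3.1, item 1: for `λ₂ = 0`, any nonequilibrium solution on the invariant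
circle `{x₁ = x₂ = 0, x₃² + x₄² = 1}` is a heteroclinic connection from `v` to `w`. -/
theorem stmt15 (α₁ α₂ lam₁ : ℝ) (h₂ : α₂ < 0) (h₁ : 0 < α₁) (hsum : α₁ + α₂ > 0)
    (u : ℝ → EuclideanSpace ℝ (Fin 4))
    (hu : ∀ t : ℝ, HasDerivAt u (Xfield α₁ α₂ lam₁ 0 (u t)) t)
    (hc₁ : ∀ t : ℝ, u t 0 = 0) (hc₂ : ∀ t : ℝ, u t 1 = 0)
    (hc : ∀ t : ℝ, (u t 2) ^ 2 + (u t 3) ^ 2 = 1)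
    (hne : u 0 ≠ vpt ∧ u 0 ≠ wpt) :
    Tendsto u atTop (nhds wpt) ∧ Tendsto u atBot (nhds vpt) :=
  stmt15_general α₁ α₂ lam₁ h₂ hsum u hu hc₁ hc₂ hc hne
end

section
/- Content of Proposition 3.1 (uniform rotation about the connection [v → w]): when λ₂ = 0 (λ₁ arbitrary), for every x ∈ ℝ⁴ the angular identity x₁·X₂(x) − x₂·X₁(x) = x₁² + x₂² holds, where X₁, X₂ denote the first two components of X. Consequently, in polar coordinates (x₁,x₂) = (s cos φ, s sin φ) the angular velocity satisfies φ̇ = 1 wherever x₁² + x₂² > 0, so any trajectory turns around the connection [v → w] in the same direction near v and near w. -/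
theorem Xfield_angular_momentum (α₁ α₂ lam₁ lam₂ : ℝ) (x : EuclideanSpace ℝ (Fin 4)) :
    x 0 * Xfield α₁ α₂ lam₁ lam₂ x 1 - x 1 * Xfield α₁ α₂ lam₁ lam₂ x 0 =
      x 0 ^ 2 + x 1 ^ 2 - lam₂ * x 1 * x 2 ^ 2 * x 3 := by
  simp only [Xfield, PiLp.toLp_apply, Matrix.cons_val_zero, Matrix.cons_val_one]
  ring

theorem Xfield_angular_momentum_of_lam₂_eq_zero (α₁ α₂ lam₁ : ℝ) (x : EuclideanSpace ℝ (Fin 4)) :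
    x 0 * Xfield α₁ α₂ lam₁ 0 x 1 - x 1 * Xfield α₁ α₂ lam₁ 0 x 0 = x 0 ^ 2 + x 1 ^ 2 := by
  simpa using Xfield_angular_momentum α₁ α₂ lam₁ 0 x

/-- Proposition 3.1 (uniform rotation about the connection `[v → w]`): for `λ₂ = 0`,
the angular identity `x₁·X₂(x) − x₂·X₁(x) = x₁² + x₂²` holds for every `x`; hence in
polar coordinates in the `(x₁,x₂)`-plane the angular velocity is `φ̇ = 1` wherever
`x₁² + x₂² > 0`, so trajectories turn around `[v → w]` in the same direction near `v`
and near `w`. -/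
theorem stmt16 (α₁ α₂ lam₁ : ℝ) :
    (∀ x : EuclideanSpace ℝ (Fin 4),
      x 0 * Xfield α₁ α₂ lam₁ 0 x 1 - x 1 * Xfield α₁ α₂ lam₁ 0 x 0 =
        (x 0) ^ 2 + (x 1) ^ 2) ∧
    (∀ x : EuclideanSpace ℝ (Fin 4), (x 0) ^ 2 + (x 1) ^ 2 > 0 →
      (x 0 * Xfield α₁ α₂ lam₁ 0 x 1 - x 1 * Xfield α₁ α₂ lam₁ 0 x 0) /
        ((x 0) ^ 2 + (x 1) ^ 2) = 1) := by
  refine ⟨Xfield_angular_momentum_of_lam₂_eq_zero α₁ α₂ lam₁, fun x hx => ?_⟩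
  rw [Xfield_angular_momentum_of_lam₂_eq_zero]
  exact div_self hx.ne'
end
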